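/- Let v : ℝ → ℝ be continuous with ∫_ℝ (1+|x|)|v(x)|dx < ∞ and let κ > 0. Then a(iκ) = 0 if and only if −κ² is an eigenvalue of the one-dimensional Schrödinger operator, i.e. if and only if there exists a nonzero twice continuously differentiable function ψ ∈ L²(ℝ) with −ψ'' + v(x)ψ = −κ²ψ on ℝ. -/

import Mathlib

open Real Set MeasureTheory Filter Complex

/-- `f` (with derivative `f'` and second derivative `f''`) is a twice continuously
differentiable solution of the one-dimensional Schrödinger equation `-f'' + v·f = k²·f` on `ℝ`. -/
def IsSchrodingerSolution (v : ℝ → ℝ) (k : ℂ) (f f' f'' : ℝ → ℂ) : Prop :=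
  (∀ x : ℝ, HasDerivAt f (f' x) x) ∧ (∀ x : ℝ, HasDerivAt f' (f'' x) x) ∧
    Continuous f'' ∧ (∀ x : ℝ, -(f'' x) + (v x : ℂ) * f x = k ^ 2 * f x)

/-- The Jost asymptotics at `+∞`: `e^{-ikx} f(x) → 1` and `e^{-ikx} f'(x) → ik` as `x → +∞`. -/
def IsJostAtPlusInfinity (k : ℂ) (f f' : ℝ → ℂ) : Prop :=
  Tendsto (fun x : ℝ => Complex.exp (-Complex.I * k * x) * f x) atTop (nhds 1) ∧
    Tendsto (fun x : ℝ => Complex.exp (-Complex.I * k * x) * f' x) atTop (nhds (Complex.I * k))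

/-- The Jost asymptotics at `-∞`: `e^{ikx} f(x) → 1` and `e^{ikx} f'(x) → -ik` as `x → -∞`. -/
def IsJostAtMinusInfinity (k : ℂ) (f f' : ℝ → ℂ) : Prop :=
  Tendsto (fun x : ℝ => Complex.exp (Complex.I * k * x) * f x) atBot (nhds 1) ∧
    Tendsto (fun x : ℝ => Complex.exp (Complex.I * k * x) * f' x) atBot (nhds (-Complex.I * k))

/-!
Solutions of `-f'' + v f = k² f` have constant Wronskian, and two solutions with vanishing
Wronskian are proportional, by uniqueness for the initial value problem. Since
`e^{κx} f₁(x) → 1` as `x → +∞` and `e^{-κx} f₂(x) → 1` as `x → -∞`, each Jost solution decays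
exponentially at its own end. If `a(iκ) = 0`, then `f₁` is a multiple of `f₂`, so it decays at
both ends and is an `L²` eigenfunction. Conversely, if `ψ ∈ L²` solves the equation and
`W(f₁, ψ) = c ≠ 0`, then `(ψ / f₁)' = -c / f₁²` is of size `e^{2κx}`, so `|ψ|` grows like
`e^{κx}`, which is impossible. Hence `ψ` is a nonzero multiple of `f₁` and, by reflection,
`W(f₂, ψ) = 0`, which forces `W(f₁, f₂) = 0`.
-/

open Asymptotics Topology

def wronskian (f f' g g' : ℝ → ℂ) (x : ℝ) : ℂ := f' x * g x - f x * g' x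

lemma wronskian_swap (f f' g g' : ℝ → ℂ) (x : ℝ) :
    wronskian g g' f f' x = -wronskian f f' g g' x := by
  unfold wronskian; ring

lemma wronskian_comp_neg (f f' g g' : ℝ → ℂ) (x : ℝ) :
    wronskian (fun x => f (-x)) (fun x => -f' (-x)) (fun x => g (-x)) (fun x => -g' (-x)) x =
      -wronskian f f' g g' (-x) := by
  unfold wronskian; ring

lemma lipschitzWith_snd_prodMk_mul_fst (a : ℂ) :
    LipschitzWith (max 1 ‖a‖₊) fun p : ℂ × ℂ => (p.2, a * p.1) :=
  LipschitzWith.prod_snd.prodMk ((lipschitzWith_smul a).comp LipschitzWith.prod_fst |>.weaken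
    (by simp))

namespace IsSchrodingerSolution

variable {v : ℝ → ℝ} {k : ℂ} {f f' f'' g g' g'' : ℝ → ℂ}

lemma continuous (hf : IsSchrodingerSolution v k f f' f'') : Continuous f :=
  continuous_iff_continuousAt.2 fun x => (hf.1 x).continuousAt

lemma const_mul (hf : IsSchrodingerSolution v k f f' f'') (c : ℂ) :
    IsSchrodingerSolution v k (fun x => c * f x) (fun x => c * f' x) (fun x => c * f'' x) :=
  ⟨fun x => (hf.1 x).const_mul c, fun x => (hf.2.1 x).const_mul c,
    continuous_const.mul hf.2.2.1, fun x => by linear_combination c * hf.2.2.2 x⟩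

lemma comp_neg (hf : IsSchrodingerSolution v k f f' f'') :
    IsSchrodingerSolution (fun x => v (-x)) k (fun x => f (-x)) (fun x => -f' (-x))
      (fun x => f'' (-x)) := by
  refine ⟨fun x => ?_, fun x => ?_, hf.2.2.1.comp continuous_neg, fun x => hf.2.2.2 (-x)⟩
  · simpa [Function.comp_def] using (hf.1 (-x)).scomp x (hasDerivAt_neg x)
  · simpa [Function.comp_def, Pi.neg_def] using ((hf.2.1 (-x)).scomp x (hasDerivAt_neg x)).neg

lemma hasDerivAt_prodMk (hf : IsSchrodingerSolution v k f f' f'') (x : ℝ) :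
    HasDerivAt (fun x => (f x, f' x)) (f' x, ((v x : ℂ) - k ^ 2) * f x) x := by
  convert (hf.1 x).prodMk (hf.2.1 x) using 2
  linear_combination hf.2.2.2 x

/-- Uniqueness for the initial value problem, via the first-order system for `(f, f')`,
which is Lipschitz uniformly on compact intervals since `v` is bounded there. -/
lemma unique (hv : Continuous v) (hf : IsSchrodingerSolution v k f f' f'')
    (hg : IsSchrodingerSolution v k g g' g'') {x₀ : ℝ} (h₀ : f x₀ = g x₀) (h₀' : f' x₀ = g' x₀) :
    f = g ∧ f' = g' := by
  suffices h : ∀ x, (f x, f' x) = (g x, g' x) from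
    ⟨funext fun x => congrArg Prod.fst (h x), funext fun x => congrArg Prod.snd (h x)⟩
  intro x
  obtain ⟨a, b, hx, hx₀⟩ : ∃ a b, x ∈ Ioo a b ∧ x₀ ∈ Ioo a b :=
    ⟨min x x₀ - 1, max x x₀ + 1, by grind⟩
  obtain ⟨C, hC⟩ := (isCompact_Icc (a := a) (b := b)).exists_bound_of_continuousOn
    (f := fun x => (v x : ℂ) - k ^ 2) (by fun_prop)
  have hlip : ∀ t ∈ Ioo a b, LipschitzOnWith (max 1 C.toNNReal)
      (fun p : ℂ × ℂ => (p.2, ((v t : ℂ) - k ^ 2) * p.1)) univ := fun t ht =>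
    ((lipschitzWith_snd_prodMk_mul_fst _).weaken (max_le_max le_rfl
      (NNReal.le_toNNReal_of_coe_le (hC t (Ioo_subset_Icc_self ht))))).lipschitzOnWith
  exact ODE_solution_unique_of_mem_Ioo hlip hx₀ (fun t _ => ⟨hf.hasDerivAt_prodMk t, trivial⟩)
    (fun t _ => ⟨hg.hasDerivAt_prodMk t, trivial⟩) (Prod.ext h₀ h₀') hx

lemma wronskian_eq (hf : IsSchrodingerSolution v k f f' f'')
    (hg : IsSchrodingerSolution v k g g' g'') (x y : ℝ) :
    wronskian f f' g g' x = wronskian f f' g g' y := by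
  have hW : ∀ x, HasDerivAt (fun x => f' x * g x - f x * g' x) 0 x := fun x =>
    ((hf.2.1 x).mul (hg.1 x)).sub ((hf.1 x).mul (hg.2.1 x)) |>.congr_deriv <| by
      linear_combination f x * hg.2.2.2 x - g x * hf.2.2.2 x
  exact is_const_of_deriv_eq_zero (fun x => (hW x).differentiableAt) (fun x => (hW x).deriv) x y

lemma eq_const_mul_of_wronskian_eq_zero (hv : Continuous v)
    (hf : IsSchrodingerSolution v k f f' f'') (hg : IsSchrodingerSolution v k g g' g'')
    {x₀ y : ℝ} (hx₀ : f x₀ ≠ 0) (hW : wronskian f f' g g' y = 0) :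
    g = (fun x => g x₀ / f x₀ * f x) ∧ g' = fun x => g x₀ / f x₀ * f' x := by
  rw [hf.wronskian_eq hg y x₀, wronskian] at hW
  refine hg.unique hv (hf.const_mul _) (by field_simp) ?_
  field_simp
  linear_combination -hW

end IsSchrodingerSolution

section Decay

variable {κ : ℝ} {f f' : ℝ → ℂ}

lemma IsJostAtPlusInfinity.tendsto_exp_mul (hj : IsJostAtPlusInfinity (I * κ) f f') :
    Tendsto (fun x : ℝ => (Real.exp (κ * x) : ℂ) * f x) atTop (𝓝 1) := by
  refine hj.1.congr fun x => ?_
  rw [ofReal_exp]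
  congr 2
  push_cast
  linear_combination (-(κ : ℂ) * x) * I_mul_I

lemma IsJostAtMinusInfinity.tendsto_exp_mul_comp_neg (hj : IsJostAtMinusInfinity (I * κ) f f') :
    Tendsto (fun x : ℝ => (Real.exp (κ * x) : ℂ) * f (-x)) atTop (𝓝 1) := by
  refine (hj.1.comp tendsto_neg_atTop_atBot).congr fun x => ?_
  rw [Function.comp_apply, ofReal_exp]
  congr 2
  push_cast
  linear_combination (-(κ : ℂ) * x) * I_mul_I

lemma eventually_ne_zero_of_tendsto_exp_mul
    (hu : Tendsto (fun x : ℝ => (Real.exp (κ * x) : ℂ) * f x) atTop (𝓝 1)) :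
    ∀ᶠ x in atTop, f x ≠ 0 :=
  (hu.eventually_ne one_ne_zero).mono fun x hx h => hx (by simp [h])

lemma isBigO_exp_of_tendsto_exp_mul
    (hu : Tendsto (fun x : ℝ => (Real.exp (κ * x) : ℂ) * f x) atTop (𝓝 1)) :
    f =O[atTop] fun x => Real.exp (-κ * x) := by
  refine IsBigO.of_bound 2 ?_
  filter_upwards [hu.norm.eventually (gt_mem_nhds (by norm_num : ‖(1 : ℂ)‖ < 2))] with x hx
  have hx' : ‖f x‖ = ‖(Real.exp (κ * x) : ℂ) * f x‖ * Real.exp (-κ * x) := by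
    rw [norm_mul, norm_real, Real.norm_of_nonneg (Real.exp_pos _).le, mul_comm, ← mul_assoc,
      ← Real.exp_add]
    simp
  rw [hx', Real.norm_of_nonneg (Real.exp_pos _).le]
  gcongr

lemma eventually_exp_le_re_inv_sq_of_tendsto_exp_mul
    (hu : Tendsto (fun x : ℝ => (Real.exp (κ * x) : ℂ) * f x) atTop (𝓝 1)) :
    ∀ᶠ x in atTop, Real.exp (2 * κ * x) / 2 ≤ ((f x ^ 2)⁻¹).re := by
  have h : Tendsto (fun x => ((((Real.exp (κ * x) : ℂ) * f x) ^ 2)⁻¹).re) atTop (𝓝 1) := by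
    have h := (hu.pow 2).inv₀ (by norm_num)
    simpa only [one_pow, inv_one, one_re, Function.comp_def] using (continuous_re.tendsto _).comp h
  filter_upwards [h.eventually (lt_mem_nhds (by norm_num : (1 / 2 : ℝ) < 1))] with x hx
  have hexp : (Real.exp (2 * κ * x) : ℂ) = (Real.exp (κ * x) : ℂ) ^ 2 := by
    rw [← ofReal_pow, ← Real.exp_nat_mul]; ring_nf
  rw [show (f x ^ 2)⁻¹ = (Real.exp (2 * κ * x) : ℂ) * (((Real.exp (κ * x) : ℂ) * f x) ^ 2)⁻¹ by
    rw [hexp, mul_pow, mul_inv, ← mul_assoc, mul_inv_cancel₀ (by simp), one_mul], re_ofReal_mul]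
  nlinarith [Real.exp_pos (2 * κ * x)]

lemma IsJostAtMinusInfinity.eventually_ne_zero (hj : IsJostAtMinusInfinity (I * κ) f f') :
    ∀ᶠ x in atBot, f x ≠ 0 := by
  simpa using tendsto_neg_atBot_atTop.eventually
    (eventually_ne_zero_of_tendsto_exp_mul hj.tendsto_exp_mul_comp_neg)

lemma IsJostAtMinusInfinity.isBigO_exp
    (hj : IsJostAtMinusInfinity (I * κ) f f') : f =O[atBot] fun x => Real.exp (κ * x) := by
  simpa [Function.comp_def] using
    (isBigO_exp_of_tendsto_exp_mul hj.tendsto_exp_mul_comp_neg).comp_tendsto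
      tendsto_neg_atBot_atTop

end Decay

lemma memLp_two_of_isBigO_exp {κ : ℝ} (hκ : 0 < κ) {f : ℝ → ℂ} (hf : Continuous f)
    (htop : f =O[atTop] fun x => Real.exp (-κ * x))
    (hbot : f =O[atBot] fun x => Real.exp (κ * x)) :
    MemLp f 2 volume := by
  rw [memLp_two_iff_integrable_sq_norm hf.aestronglyMeasurable]
  have hsq (a : ℝ) : (fun x => Real.exp (a * x) ^ 2) = fun x => Real.exp (2 * a * x) := by
    ext x; rw [← Real.exp_nat_mul]; ring_nf
  refine (hf.norm.pow 2).locallyIntegrable.integrable_of_isBigO_atBot_atTop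
    (hbot.norm_left.pow 2) ?_ (htop.norm_left.pow 2) ?_
  · rw [hsq]
    exact ⟨Iic 0, Iic_mem_atBot 0, integrableOn_exp_mul_Iic (by positivity) 0⟩
  · rw [hsq]
    exact ⟨Ioi 0, Ioi_mem_atTop 0, integrableOn_exp_mul_Ioi (by linarith) 0⟩

lemma MeasureTheory.MemLp.not_tendsto_norm_atTop {E : Type*} [NormedAddCommGroup E]
    {ψ : ℝ → E} {p : ENNReal} (hψ : MemLp ψ p volume) (hp₀ : p ≠ 0) (hp : p ≠ ⊤) :
    ¬Tendsto (fun x => ‖ψ x‖) atTop atTop := by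
  intro h
  obtain ⟨N, hN⟩ := (h.eventually_ge_atTop 1).exists_forall_of_atTop
  have hsub : Ici N ⊆ {x | (1 : NNReal) ≤ ‖ψ x‖₊} := fun x hx => by
    simpa [← NNReal.coe_le_coe] using hN x hx
  exact ((measure_mono hsub).trans_lt (hψ.meas_ge_lt_top hp₀ hp one_ne_zero)).ne
    (by simp [Real.volume_Ici])

/-- Reduction of order: `(ψ / (c f))' = -1 / f²` and `Re (1 / f²) ≥ e^{2κx} / 2`. -/
lemma exists_eventually_exp_sub_le_norm_div_of_wronskian_eq {κ : ℝ} (hκ : 0 < κ)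
    {f f' ψ ψ' : ℝ → ℂ} {c : ℂ} (hc : c ≠ 0) (hf : ∀ x, HasDerivAt f (f' x) x)
    (hψ : ∀ x, HasDerivAt ψ (ψ' x) x) (hW : ∀ x, wronskian f f' ψ ψ' x = c)
    (hu : Tendsto (fun x : ℝ => (Real.exp (κ * x) : ℂ) * f x) atTop (𝓝 1)) :
    ∃ B, ∀ᶠ x in atTop, Real.exp (2 * κ * x) / (4 * κ) - B ≤ ‖ψ x / (c * f x)‖ := by
  obtain ⟨M, hM⟩ := ((eventually_ne_zero_of_tendsto_exp_mul hu).and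
    (eventually_exp_le_re_inv_sq_of_tendsto_exp_mul hu)).exists_forall_of_atTop
  set G : ℝ → ℝ := fun x => Real.exp (2 * κ * x) / (4 * κ)
  have hG : ∀ x, HasDerivAt G (Real.exp (2 * κ * x) / 2) x := fun x => by
    refine ((((hasDerivAt_id x).const_mul (2 * κ)).exp).div_const (4 * κ)).congr_deriv ?_
    field_simp
    simp only [id]
    ring
  have hq : ∀ x ≥ M, HasDerivAt (fun x => ψ x / (c * f x)) (-(f x ^ 2)⁻¹) x := fun x hx => by
    refine ((hψ x).div ((hf x).const_mul c) (mul_ne_zero hc (hM x hx).1)).congr_deriv ?_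
    have hWx := hW x
    rw [wronskian] at hWx
    field_simp [(hM x hx).1]
    linear_combination -hWx
  set F : ℝ → ℝ := fun x => (ψ x / (c * f x)).re + G x
  have hF' : ∀ x ≥ M, HasDerivAt F (-((f x ^ 2)⁻¹).re + Real.exp (2 * κ * x) / 2) x :=
    fun x hx => (reCLM.hasFDerivAt.comp_hasDerivAt x (hq x hx)).add (hG x)
  have hF : AntitoneOn F (Ici M) := by
    refine antitoneOn_of_hasDerivWithinAt_nonpos (convex_Ici M)
      (fun x hx => (hF' x hx).continuousAt.continuousWithinAt)
      (fun x hx => (hF' x (interior_subset hx)).hasDerivWithinAt) fun x hx => ?_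
    linarith [(hM x (interior_subset hx)).2]
  refine ⟨F M, eventually_atTop.2 ⟨M, fun x hx => ?_⟩⟩
  linarith [hF self_mem_Ici (mem_Ici.2 hx) hx, neg_abs_le (ψ x / (c * f x)).re,
    abs_re_le_norm (ψ x / (c * f x))]

lemma tendsto_norm_atTop_of_wronskian_eq {κ : ℝ} (hκ : 0 < κ) {f f' ψ ψ' : ℝ → ℂ} {c : ℂ}
    (hc : c ≠ 0) (hf : ∀ x, HasDerivAt f (f' x) x) (hψ : ∀ x, HasDerivAt ψ (ψ' x) x)
    (hW : ∀ x, wronskian f f' ψ ψ' x = c)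
    (hu : Tendsto (fun x : ℝ => (Real.exp (κ * x) : ℂ) * f x) atTop (𝓝 1)) :
    Tendsto (fun x => ‖ψ x‖) atTop atTop := by
  obtain ⟨B, hB⟩ := exists_eventually_exp_sub_le_norm_div_of_wronskian_eq hκ hc hf hψ hW hu
  have hψ_ge : ∀ᶠ x in atTop,
      ‖c‖ * (‖f x‖ * (Real.exp (2 * κ * x) / (4 * κ) - B)) ≤ ‖ψ x‖ := by
    filter_upwards [hB, eventually_ne_zero_of_tendsto_exp_mul hu] with x hx hfx
    calc ‖c‖ * (‖f x‖ * (Real.exp (2 * κ * x) / (4 * κ) - B))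
        = ‖c * f x‖ * (Real.exp (2 * κ * x) / (4 * κ) - B) := by rw [norm_mul]; ring
      _ ≤ ‖c * f x‖ * ‖ψ x / (c * f x)‖ := by gcongr
      _ = ‖ψ x‖ := by rw [← norm_mul, mul_div_cancel₀ _ (mul_ne_zero hc hfx)]
  have hnorm : Tendsto (fun x => ‖f x‖ * Real.exp (κ * x)) atTop (𝓝 1) := by
    simpa [norm_mul, mul_comm, Complex.norm_exp] using hu.norm
  have hgrow : Tendsto (fun x => ‖c‖ * (Real.exp (κ * x) / (4 * κ) +
      -B * Real.exp (-(κ * x)))) atTop atTop := by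
    have hκx := tendsto_id.const_mul_atTop hκ
    refine Tendsto.const_mul_atTop (norm_pos_iff.2 hc) (Tendsto.atTop_add ?_
      ((Real.tendsto_exp_neg_atTop_nhds_zero.comp hκx).const_mul (-B)))
    exact (Real.tendsto_exp_atTop.comp hκx).atTop_div_const (by positivity)
  refine tendsto_atTop_mono' atTop hψ_ge ((hnorm.pos_mul_atTop one_pos hgrow).congr fun x => ?_)
  rw [show 2 * κ * x = κ * x + κ * x by ring, Real.exp_add, Real.exp_neg]
  field_simp
  ring

lemma IsSchrodingerSolution.wronskian_eq_zero_of_memLp {v : ℝ → ℝ} {k : ℂ} {κ : ℝ} (hκ : 0 < κ)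
    {f f' f'' ψ ψ' ψ'' : ℝ → ℂ} (hf : IsSchrodingerSolution v k f f' f'')
    (hu : Tendsto (fun x : ℝ => (Real.exp (κ * x) : ℂ) * f x) atTop (𝓝 1))
    (hψ : IsSchrodingerSolution v k ψ ψ' ψ'') (hmem : MemLp ψ 2 volume) (x : ℝ) :
    wronskian f f' ψ ψ' x = 0 := by
  by_contra hW
  exact hmem.not_tendsto_norm_atTop two_ne_zero ENNReal.ofNat_ne_top
    (tendsto_norm_atTop_of_wronskian_eq hκ hW hf.1 hψ.1 (fun y => hf.wronskian_eq hψ y x) hu)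

theorem bound_state_iff_a_vanishes_general
    (v : ℝ → ℝ) (hv : Continuous v)
    (κ : ℝ) (hκ : 0 < κ)
    (f₁ f₁' f₁'' f₂ f₂' f₂'' : ℝ → ℂ)
    (h1 : IsSchrodingerSolution v (Complex.I * κ) f₁ f₁' f₁'')
    (hj1 : IsJostAtPlusInfinity (Complex.I * κ) f₁ f₁')
    (h2 : IsSchrodingerSolution v (Complex.I * κ) f₂ f₂' f₂'')
    (hj2 : IsJostAtMinusInfinity (Complex.I * κ) f₂ f₂') :
    (f₁' 0 * f₂ 0 - f₁ 0 * f₂' 0) / (2 * Complex.I * (Complex.I * κ)) = 0 ↔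
      ∃ ψ ψ' ψ'' : ℝ → ℂ, IsSchrodingerSolution v (Complex.I * κ) ψ ψ' ψ'' ∧
        MemLp ψ 2 volume ∧ ψ ≠ 0 := by
  obtain ⟨x₁, hx₁⟩ := (eventually_ne_zero_of_tendsto_exp_mul hj1.tendsto_exp_mul).exists
  obtain ⟨x₂, hx₂⟩ := hj2.eventually_ne_zero.exists
  rw [div_eq_zero_iff, or_iff_left (by simp [hκ.ne'])]
  change wronskian f₁ f₁' f₂ f₂' 0 = 0 ↔ _
  constructor
  · intro hW
    obtain ⟨hf₁, -⟩ := h2.eq_const_mul_of_wronskian_eq_zero hv h1 hx₂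
      (by rw [wronskian_swap, hW, neg_zero])
    refine ⟨f₁, f₁', f₁'', h1, memLp_two_of_isBigO_exp hκ h1.continuous
      (isBigO_exp_of_tendsto_exp_mul hj1.tendsto_exp_mul) ?_, fun h => hx₁ (by simp [h])⟩
    rw [hf₁]
    exact hj2.isBigO_exp.const_mul_left _
  · rintro ⟨ψ, ψ', ψ'', hψ, hmem, hψ₀⟩
    obtain ⟨hψf, hψf'⟩ := h1.eq_const_mul_of_wronskian_eq_zero hv hψ hx₁
      (h1.wronskian_eq_zero_of_memLp hκ hj1.tendsto_exp_mul hψ hmem 0)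
    have hα : ψ x₁ / f₁ x₁ ≠ 0 := fun h => hψ₀ (by rw [hψf, h]; funext x; simp)
    have hW₂ : wronskian f₂ f₂' ψ ψ' 0 = 0 := by
      simpa [wronskian_comp_neg] using
        h2.comp_neg.wronskian_eq_zero_of_memLp hκ hj2.tendsto_exp_mul_comp_neg hψ.comp_neg
          (hmem.comp_measurePreserving (Measure.measurePreserving_neg volume)) 0
    rw [hψf, hψf'] at hW₂
    unfold wronskian at hW₂ ⊢
    refine mul_left_cancel₀ hα ?_
    linear_combination -hW₂

/-- for `κ > 0`, `a(iκ) = 0` iff `-κ²` is an eigenvalue of the one-dimensional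
Schrödinger operator, i.e. iff there is a nonzero twice continuously differentiable
`ψ ∈ L²(ℝ)` with `-ψ'' + v·ψ = -κ²·ψ`. Here `a(iκ) = W(f₁(·,iκ), f₂(·,iκ))/(2i·(iκ))` is
computed from the Jost solutions via the (x-independent) Wronskian `W(f,g) = f'g - fg'`. -/
theorem bound_state_iff_a_vanishes
    (v : ℝ → ℝ) (hv : Continuous v)
    (hint : Integrable (fun x : ℝ => (1 + |x|) * |v x|))
    (κ : ℝ) (hκ : 0 < κ)
    (f₁ f₁' f₁'' f₂ f₂' f₂'' : ℝ → ℂ)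
    (h1 : IsSchrodingerSolution v (Complex.I * κ) f₁ f₁' f₁'')
    (hj1 : IsJostAtPlusInfinity (Complex.I * κ) f₁ f₁')
    (h2 : IsSchrodingerSolution v (Complex.I * κ) f₂ f₂' f₂'')
    (hj2 : IsJostAtMinusInfinity (Complex.I * κ) f₂ f₂') :
    (f₁' 0 * f₂ 0 - f₁ 0 * f₂' 0) / (2 * Complex.I * (Complex.I * κ)) = 0 ↔
      ∃ ψ ψ' ψ'' : ℝ → ℂ, IsSchrodingerSolution v (Complex.I * κ) ψ ψ' ψ'' ∧
        MemLp ψ 2 volume ∧ ψ ≠ 0 :=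
  bound_state_iff_a_vanishes_general v hv κ hκ f₁ f₁' f₁'' f₂ f₂' f₂'' h1 hj1 h2 hj2
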